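/- In general (without independence), T is monotone under adding a component: T_{d_1,…,d_{k+1}}(μ_{C̃}; ν_1,…,ν_{k+1}) ≥ T_{d_1,…,d_k}(μ_C; ν_1,…,ν_k), where μ_C is the marginal of μ_{C̃} on the first k blocks. -/

import Mathlib

open MeasureTheory
open scoped ENNReal unitInterval

/-- The optimal-transport cost between two measures `μ, ν` on `X` for the cost
function `c` : the infimum, over all couplings `γ` of `μ` and `ν`, of `∫ c dγ`.
For `c u v = ‖u - v‖²` this is the squared 2-Wasserstein distance `W₂²(μ, ν)`. -/
noncomputable def Wsq {X : Type*} [MeasurableSpace X] (c : X → X → ℝ)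
    (μ ν : Measure X) : ℝ≥0∞ :=
  ⨅ (γ : Measure (X × X)) (_ : γ.map Prod.fst = μ ∧ γ.map Prod.snd = ν),
    ∫⁻ p, ENNReal.ofReal (c p.1 p.2) ∂γ

/-- The `i`-th block `[0,1]^{d i}` of the cube `[0,1]^q`, `q = d 0 + ⋯ + d (k-1)`. -/
abbrev Blk {k : ℕ} (d : Fin k → ℕ) (i : Fin k) : Type := Fin (d i) → I

/-- The cube `[0,1]^q` decomposed in `k` blocks of dimensions `d i`. -/
abbrev Cube {k : ℕ} (d : Fin k → ℕ) : Type := ∀ i, Blk d i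

/-- Squared Euclidean cost `‖a - b‖²` on the block `[0,1]^{d i}`. -/
noncomputable def blockCost {k : ℕ} (d : Fin k → ℕ) (i : Fin k) (a b : Blk d i) : ℝ :=
  ∑ j, dist (a j) (b j) ^ 2

/-- Squared Euclidean cost `‖u - v‖²` on the cube `[0,1]^q`. -/
noncomputable def jointCost {k : ℕ} (d : Fin k → ℕ) (u v : Cube d) : ℝ :=
  ∑ i, ∑ j, dist (u i j) (v i j) ^ 2

/-- The marginal of a measure on the cube on the `i`-th coordinate block. -/
noncomputable def marg {k : ℕ} (d : Fin k → ℕ) (μ : Measure (Cube d)) (i : Fin k) :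
    Measure (Blk d i) :=
  μ.map (fun u => u i)

/-- `T_{d₁,…,d_k}(π; ν₁,…,ν_k) = W₂²(π, ν₁ × ⋯ × ν_k) − ∑ i W₂²(π_i, ν_i)`. -/
noncomputable def Tdep {k : ℕ} (d : Fin k → ℕ) (ν : ∀ i, Measure (Blk d i))
    (π : Measure (Cube d)) : ℝ :=
  (Wsq (jointCost d) π (Measure.pi ν)).toReal -
    ∑ i, (Wsq (blockCost d i) (marg d π i) (ν i)).toReal

/-- The marginal of a measure on a `(k+1)`-block cube on the first `k` blocks. -/
noncomputable def firstMarg {k : ℕ} (d : Fin (k + 1) → ℕ) (μ : Measure (Cube d)) :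
    Measure (Cube (fun i : Fin k => d i.castSucc)) :=
  μ.map (fun u => fun i : Fin k => u i.castSucc)

/-!
Any coupling of `μ_C̃` and `ν₁ × ⋯ × ν_{k+1}` projects to a coupling of `μ_C` and
`ν₁ × ⋯ × ν_k` and to a coupling of the last-block marginal `μ_{C_{k+1}}` and `ν_{k+1}`, while the
squared Euclidean cost on the big cube is the sum of the two costs. Hence
`W₂²(μ_C̃, ν₁ × ⋯ × ν_{k+1}) ≥ W₂²(μ_C, ν₁ × ⋯ × ν_k) + W₂²(μ_{C_{k+1}}, ν_{k+1})`, and the last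
term is exactly the extra term subtracted in `T_{d₁,…,d_{k+1}}`.
-/

section Wsq

variable {X Y : Type*} [MeasurableSpace X] [MeasurableSpace Y]

lemma Wsq_le_lintegral (c : X → X → ℝ) {μ ν : Measure X} {γ : Measure (X × X)}
    (hγ : γ.map Prod.fst = μ ∧ γ.map Prod.snd = ν) :
    Wsq c μ ν ≤ ∫⁻ p, ENNReal.ofReal (c p.1 p.2) ∂γ :=
  iInf₂_le γ hγ

lemma Wsq_ne_top_of_le {c : X → X → ℝ} {B : ℝ} (hc : ∀ x y, c x y ≤ B)
    (μ ν : Measure X) [IsProbabilityMeasure μ] [IsProbabilityMeasure ν] : Wsq c μ ν ≠ ⊤ := by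
  refine ne_top_of_le_ne_top (ENNReal.ofReal_ne_top (r := B)) ?_
  calc Wsq c μ ν ≤ ∫⁻ p, ENNReal.ofReal (c p.1 p.2) ∂(μ.prod ν) :=
        Wsq_le_lintegral c ⟨by simp, by simp⟩
    _ ≤ ∫⁻ _, ENNReal.ofReal B ∂(μ.prod ν) :=
        lintegral_mono fun p => ENNReal.ofReal_le_ofReal (hc p.1 p.2)
    _ = ENNReal.ofReal B := by simp

lemma Wsq_map_le (c : Y → Y → ℝ) {f : X → Y} (hf : Measurable f) (μ ν : Measure X) :
    Wsq c (μ.map f) (ν.map f) ≤ Wsq (fun x y => c (f x) (f y)) μ ν := by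
  refine le_iInf₂ fun γ hγ => ?_
  have hff : Measurable (Prod.map f f) := hf.prodMap hf
  have hcoupling : (γ.map (Prod.map f f)).map Prod.fst = μ.map f ∧
      (γ.map (Prod.map f f)).map Prod.snd = ν.map f := by
    rw [Measure.map_map measurable_fst hff, Measure.map_map measurable_snd hff, ← hγ.1, ← hγ.2,
      Measure.map_map hf measurable_fst, Measure.map_map hf measurable_snd]
    exact ⟨rfl, rfl⟩
  calc Wsq c (μ.map f) (ν.map f)
      ≤ ∫⁻ q, ENNReal.ofReal (c q.1 q.2) ∂(γ.map (Prod.map f f)) := Wsq_le_lintegral c hcoupling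
    _ ≤ ∫⁻ p, ENNReal.ofReal (c (f p.1) (f p.2)) ∂γ := lintegral_map_le _ _

lemma Wsq_add_Wsq_le {c₁ c₂ : X → X → ℝ} (h₁ : ∀ x y, 0 ≤ c₁ x y) (h₂ : ∀ x y, 0 ≤ c₂ x y)
    (μ ν : Measure X) :
    Wsq c₁ μ ν + Wsq c₂ μ ν ≤ Wsq (fun x y => c₁ x y + c₂ x y) μ ν := by
  refine le_iInf₂ fun γ hγ => ?_
  calc Wsq c₁ μ ν + Wsq c₂ μ ν
      ≤ ∫⁻ p, ENNReal.ofReal (c₁ p.1 p.2) ∂γ + ∫⁻ p, ENNReal.ofReal (c₂ p.1 p.2) ∂γ :=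
        add_le_add (Wsq_le_lintegral c₁ hγ) (Wsq_le_lintegral c₂ hγ)
    _ ≤ ∫⁻ p, ENNReal.ofReal (c₁ p.1 p.2) + ENNReal.ofReal (c₂ p.1 p.2) ∂γ :=
        le_lintegral_add _ _
    _ = ∫⁻ p, ENNReal.ofReal (c₁ p.1 p.2 + c₂ p.1 p.2) ∂γ := by
        simp_rw [ENNReal.ofReal_add (h₁ _ _) (h₂ _ _)]

end Wsq

lemma MeasureTheory.Measure.pi_map_castSucc {n : ℕ} {α : Fin (n + 1) → Type*}
    [∀ i, MeasurableSpace (α i)] (μ : ∀ i, Measure (α i)) [∀ i, SigmaFinite (μ i)]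
    [IsProbabilityMeasure (μ (Fin.last n))] :
    (Measure.pi μ).map (fun u (i : Fin n) => u i.castSucc) =
      Measure.pi fun i : Fin n => μ i.castSucc := by
  refine (Measure.pi_eq fun s hs => ?_).symm
  rw [Measure.map_apply (by fun_prop) (MeasurableSet.univ_pi hs)]
  have hpre : (fun (u : ∀ i, α i) (i : Fin n) => u i.castSucc) ⁻¹' Set.univ.pi s =
      Set.univ.pi (Fin.lastCases Set.univ s) := by
    ext u
    simp [Fin.forall_fin_succ', Fin.lastCases_castSucc, Fin.lastCases_last]
  rw [hpre, Measure.pi_pi, Fin.prod_univ_castSucc]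
  simp

section Cube

variable {k : ℕ}

lemma jointCost_nonneg (d : Fin k → ℕ) (u v : Cube d) : 0 ≤ jointCost d u v := by
  unfold jointCost; positivity

lemma blockCost_nonneg (d : Fin k → ℕ) (i : Fin k) (a b : Blk d i) : 0 ≤ blockCost d i a b := by
  unfold blockCost; positivity

lemma jointCost_le_sum_dim (d : Fin k → ℕ) (u v : Cube d) :
    jointCost d u v ≤ ∑ i, (d i : ℝ) := by
  unfold jointCost
  gcongr with i
  calc ∑ j, dist (u i j) (v i j) ^ 2 ≤ ∑ _j : Fin (d i), (1 : ℝ) := by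
        gcongr with j
        exact pow_le_one₀ dist_nonneg (Real.dist_le_of_mem_Icc_01 (u i j).2 (v i j).2)
    _ = d i := by simp

lemma jointCost_eq_add_blockCost_last (d : Fin (k + 1) → ℕ) (u v : Cube d) :
    jointCost d u v = jointCost (fun i : Fin k => d i.castSucc)
        (fun i => u i.castSucc) (fun i => v i.castSucc) +
      blockCost d (Fin.last k) (u (Fin.last k)) (v (Fin.last k)) :=
  Fin.sum_univ_castSucc _

lemma blockCost_castSucc (d : Fin (k + 1) → ℕ) (i : Fin k) :
    blockCost (fun i : Fin k => d i.castSucc) i = blockCost d i.castSucc :=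
  rfl

lemma marg_firstMarg (d : Fin (k + 1) → ℕ) (μ : Measure (Cube d)) (i : Fin k) :
    marg (fun i : Fin k => d i.castSucc) (firstMarg d μ) i = marg d μ i.castSucc := by
  unfold marg firstMarg
  rw [Measure.map_map (by fun_prop) (by fun_prop)]
  rfl

lemma Wsq_firstMarg_add_Wsq_marg_last_le (d : Fin (k + 1) → ℕ) (μ : Measure (Cube d))
    (ν : ∀ i, Measure (Blk d i)) [∀ i, IsProbabilityMeasure (ν i)] :
    Wsq (jointCost (fun i : Fin k => d i.castSucc)) (firstMarg d μ)
        (Measure.pi fun i : Fin k => ν i.castSucc) +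
      Wsq (blockCost d (Fin.last k)) (marg d μ (Fin.last k)) (ν (Fin.last k)) ≤
      Wsq (jointCost d) μ (Measure.pi ν) := by
  have hinit : Measurable fun (u : Cube d) (i : Fin k) => u i.castSucc := by fun_prop
  have hlast : Measurable fun u : Cube d => u (Fin.last k) := by fun_prop
  calc _ = Wsq (jointCost (fun i : Fin k => d i.castSucc)) (firstMarg d μ)
          ((Measure.pi ν).map fun u i => u i.castSucc) +
        Wsq (blockCost d (Fin.last k)) (marg d μ (Fin.last k))
          ((Measure.pi ν).map fun u => u (Fin.last k)) := by
        rw [Measure.pi_map_castSucc, (measurePreserving_eval ν (Fin.last k)).map_eq]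
    _ ≤ _ + _ := add_le_add (Wsq_map_le _ hinit μ _) (Wsq_map_le _ hlast μ _)
    _ ≤ _ := Wsq_add_Wsq_le (fun _ _ => jointCost_nonneg _ _ _)
        (fun _ _ => blockCost_nonneg _ _ _ _) μ _
    _ = Wsq (jointCost d) μ (Measure.pi ν) := by
        congr 1
        ext u v
        exact (jointCost_eq_add_blockCost_last d u v).symm

end Cube

/-- Monotonicity of `T` under adding a component:
`T_{d₁,…,d_{k+1}}(μ_C̃; ν₁,…,ν_{k+1}) ≥ T_{d₁,…,d_k}(μ_C; ν₁,…,ν_k)`,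
where `μ_C` is the marginal of `μ_C̃` on the first `k` blocks. -/
theorem Tdep_first_le_Tdep {k : ℕ} (d : Fin (k + 1) → ℕ)
    (μt : Measure (Cube d)) [IsProbabilityMeasure μt]
    (ν : ∀ i, Measure (Blk d i)) [∀ i, IsProbabilityMeasure (ν i)] :
    Tdep (fun i : Fin k => d i.castSucc) (fun i => ν i.castSucc) (firstMarg d μt) ≤
      Tdep d ν μt := by
  have hsplit := Wsq_firstMarg_add_Wsq_marg_last_le d μt ν
  have hfin : Wsq (jointCost d) μt (Measure.pi ν) ≠ ⊤ :=
    Wsq_ne_top_of_le (jointCost_le_sum_dim d) _ _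
  have hreal := ENNReal.toReal_mono hfin hsplit
  rw [ENNReal.toReal_add (ne_top_of_le_ne_top hfin (le_self_add.trans hsplit))
    (ne_top_of_le_ne_top hfin (le_add_self.trans hsplit))] at hreal
  unfold Tdep
  simp only [marg_firstMarg, blockCost_castSucc, Fin.sum_univ_castSucc]
  linarith
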